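/- arXiv:1303.5106 — 2 statements merged into one kernel-verified Lean document; each statement's English description precedes it below -/
import Mathlib

section
/- (Weak Witt extension) Let v, w ∈ V be primitive vectors with h(v,v) = h(w,w). Then there exists g in the unitary group U of (V, h) with g(v) = w. -/
open MulOpposite

/-- A `*`-hermitian form on a right `A`-module `V` (right modules are encoded as
modules over the opposite ring `Aᵐᵒᵖ`): it is additive and `A`-linear in the second
variable and satisfies `h v u = (h u v)*`. -/
structure HermitianForm (A V : Type*) [Ring A] [StarRing A] [AddCommGroup V]
    [Module Aᵐᵒᵖ V] where
  toFun : V → V → A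
  add_right : ∀ u v w : V, toFun u (v + w) = toFun u v + toFun u w
  smul_right : ∀ (a : A) (u v : V), toFun u (op a • v) = toFun u v * a
  conj_symm : ∀ u v : V, toFun v u = star (toFun u v)

namespace HermitianForm

variable {A V : Type*} [Ring A] [StarRing A] [AddCommGroup V] [Module Aᵐᵒᵖ V]

/-- Non-degeneracy: the map `u ↦ h u -` is a bijection of `V` onto the dual module. -/
def Nondeg (h : HermitianForm A V) : Prop :=
  ∀ φ : V →ₗ[Aᵐᵒᵖ] A, ∃! u : V, ∀ v : V, h.toFun u v = φ v

end HermitianForm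

/-- A vector of the free module `V` of rank `m` is primitive if it belongs to a basis. -/
def IsPrimitive (A : Type*) {V : Type*} [Ring A] [AddCommGroup V] [Module Aᵐᵒᵖ V]
    (m : ℕ) (v : V) : Prop :=
  ∃ (b : Module.Basis (Fin m) Aᵐᵒᵖ V) (i : Fin m), b i = v

/-!
For a unit `d` with `h(u, u) = d + d*`, the quasi-reflection `x ↦ x - u d⁻¹ h(u, x)` is unitary.
With `u = x - y` it sends `x` to `y` whenever `h(x, x) = h(y, y)` and `h(x - y, x)` is a unit.
This settles the case where `h(v - w, v)` or `h(v + w, v)` is a unit (`-1` is unitary). Otherwise,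
as `2` is a unit, `h(v, v)` and `h(w, v)` lie in the maximal ideal. Primitivity and
non-degeneracy then give `z` with `h(z, v)`, `h(z, w)` and `h(z, z)` units, and the quasi-reflection
along `z` (with `d = h(z, z) / 2`) moves `v` to a vector `u` for which `h(u - w, u)` is a unit.
-/

namespace IsLocalRing

variable {A : Type*} [Ring A] [IsLocalRing A] {a b : A}

theorem isUnit_add_of_isUnit_left (ha : IsUnit a) (hb : ¬IsUnit b) : IsUnit (a + b) := by
  by_contra hab
  exact nonunits_add hab ((IsUnit.neg_iff b).not.mpr hb) (by simpa using ha)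

theorem isUnit_add_of_isUnit_right (ha : ¬IsUnit a) (hb : IsUnit b) : IsUnit (a + b) :=
  add_comm b a ▸ isUnit_add_of_isUnit_left hb ha

theorem isUnit_sub_of_isUnit_right (ha : ¬IsUnit a) (hb : IsUnit b) : IsUnit (a - b) :=
  sub_eq_add_neg a b ▸ isUnit_add_of_isUnit_right ha hb.neg

theorem not_isUnit_of_not_isUnit_add_of_not_isUnit_sub (h2 : IsUnit (2 : A))
    (hadd : ¬IsUnit (a + b)) (hsub : ¬IsUnit (a - b)) : ¬IsUnit a ∧ ¬IsUnit b := by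
  have h2a : ¬IsUnit (2 * a) := by
    rw [show 2 * a = (a + b) + (a - b) by noncomm_ring]
    exact nonunits_add hadd hsub
  have h2b : ¬IsUnit (2 * b) := by
    rw [show 2 * b = (a + b) + -(a - b) by noncomm_ring]
    exact nonunits_add hadd ((IsUnit.neg_iff _).not.mpr hsub)
  exact ⟨fun ha => h2a (h2.mul ha), fun hb => h2b (h2.mul hb)⟩

end IsLocalRing

section Units

variable {A : Type*} [Ring A]

theorem Units.inv_mul_add_mul_inv (a b : Aˣ) :
    (↑a⁻¹ : A) * (a + b) * ↑b⁻¹ = ↑b⁻¹ + ↑a⁻¹ := by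
  rw [mul_add, add_mul, Units.inv_mul, one_mul, mul_assoc, Units.mul_inv, mul_one, add_comm]

theorem exists_units_add_star_eq [StarRing A] (h2 : IsUnit (2 : A)) {e : A} (he : IsUnit e)
    (hstar : star e = e) : ∃ d : Aˣ, (d : A) + star ↑d = e := by
  obtain ⟨t, ht⟩ := h2
  have hstar_t : star (↑t⁻¹ : A) = ↑t⁻¹ := by
    rw [← Units.coe_star_inv, show star t = t from Units.ext (by simp [ht])]
  refine ⟨he.unit * t⁻¹, ?_⟩
  have hcomm : Commute (↑t⁻¹ : A) e := (ht ▸ Commute.ofNat_left 2 e).units_inv_left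
  rw [Units.val_mul, IsUnit.unit_spec, star_mul, hstar_t, hstar, hcomm.eq, ← mul_add,
    ← two_mul, ← ht, Units.mul_inv, mul_one]

end Units

namespace HermitianForm

variable {A V : Type*} [Ring A] [StarRing A] [AddCommGroup V] [Module Aᵐᵒᵖ V]
  (h : HermitianForm A V)

def toAddMonoidHom (u : V) : V →+ A := AddMonoidHom.mk' (h.toFun u) (h.add_right u)

theorem neg_right (u v : V) : h.toFun u (-v) = -h.toFun u v := (h.toAddMonoidHom u).map_neg v

theorem sub_right (u v w : V) : h.toFun u (v - w) = h.toFun u v - h.toFun u w :=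
  (h.toAddMonoidHom u).map_sub v w

theorem add_left (u v w : V) : h.toFun (u + v) w = h.toFun u w + h.toFun v w := by
  rw [h.conj_symm, h.add_right, star_add, ← h.conj_symm, ← h.conj_symm]

theorem neg_left (u v : V) : h.toFun (-u) v = -h.toFun u v := by
  rw [h.conj_symm, h.neg_right, star_neg, ← h.conj_symm]

theorem sub_left (u v w : V) : h.toFun (u - v) w = h.toFun u w - h.toFun v w := by
  rw [h.conj_symm, h.sub_right, star_sub, ← h.conj_symm, ← h.conj_symm]

theorem smul_left (a : A) (u v : V) : h.toFun (op a • u) v = star a * h.toFun u v := by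
  rw [h.conj_symm, h.smul_right, star_mul, ← h.conj_symm]

theorem star_toFun_self (u : V) : star (h.toFun u u) = h.toFun u u := (h.conj_symm u u).symm

def unitaryGroup : Subgroup (V ≃ₗ[Aᵐᵒᵖ] V) where
  carrier := {g | ∀ x y, h.toFun (g x) (g y) = h.toFun x y}
  one_mem' _ _ := rfl
  mul_mem' hg hk x y := (hg _ _).trans (hk x y)
  inv_mem' {g} hg x y := by
    rw [← hg, LinearEquiv.coe_inv, g.apply_symm_apply, g.apply_symm_apply]

section QuasiReflection

def quasiReflectionMap (u : V) (c : A) : V →ₗ[Aᵐᵒᵖ] V where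
  toFun x := x - op (c * h.toFun u x) • u
  map_add' x y := by
    rw [h.add_right, mul_add, op_add, add_smul]
    abel
  map_smul' r x := by
    rw [← op_unop r, h.smul_right, RingHom.id_apply, smul_sub, ← mul_assoc, op_mul, mul_smul,
      op_unop]

theorem quasiReflectionMap_apply (u : V) (c : A) (x : V) :
    h.quasiReflectionMap u c x = x - op (c * h.toFun u x) • u := rfl

variable {h} {u : V} {d : Aˣ}

theorem quasiReflectionMap_quasiReflectionMap_star_inv (hd : h.toFun u u = d + star ↑d) (x : V) :
    h.quasiReflectionMap u ↑d⁻¹ (h.quasiReflectionMap u (star ↑d⁻¹) x) = x := by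
  have key : (↑d⁻¹ : A) * h.toFun u u * star ↑d⁻¹ = star ↑d⁻¹ + ↑d⁻¹ := by
    simpa [hd, Units.coe_star, Units.coe_star_inv] using Units.inv_mul_add_mul_inv d (star d)
  have hcoeff : star ↑d⁻¹ * h.toFun u x +
      ↑d⁻¹ * (h.toFun u x - h.toFun u u * (star ↑d⁻¹ * h.toFun u x)) = 0 := by
    rw [mul_sub, ← mul_assoc, ← mul_assoc, key]
    noncomm_ring
  rw [quasiReflectionMap_apply, quasiReflectionMap_apply, h.sub_right, h.smul_right, sub_sub,
    ← add_smul, ← op_add, hcoeff, op_zero, zero_smul, sub_zero]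

theorem quasiReflectionMap_isometry (hd : h.toFun u u = d + star ↑d) (x y : V) :
    h.toFun (h.quasiReflectionMap u ↑d⁻¹ x) (h.quasiReflectionMap u ↑d⁻¹ y) = h.toFun x y := by
  have key : star (↑d⁻¹ : A) * h.toFun u u * ↑d⁻¹ = ↑d⁻¹ + star ↑d⁻¹ := by
    simpa [hd, add_comm, Units.coe_star, Units.coe_star_inv] using
      Units.inv_mul_add_mul_inv (star d) d
  have hcoeff : ∀ β γ : A, β * star ↑d⁻¹ * γ + (β - β * star ↑d⁻¹ * h.toFun u u) * (↑d⁻¹ * γ) =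
      β * (↑d⁻¹ + star ↑d⁻¹ - star ↑d⁻¹ * h.toFun u u * ↑d⁻¹) * γ := by
    intro β γ; noncomm_ring
  simp only [quasiReflectionMap_apply, h.sub_right, h.smul_right, h.sub_left, h.smul_left, star_mul,
    ← h.conj_symm u x]
  rw [sub_sub, hcoeff, key, sub_self, mul_zero, zero_mul, sub_zero]

variable (h) in
def quasiReflection (u : V) (d : Aˣ) (hd : h.toFun u u = d + star ↑d) : h.unitaryGroup :=
  ⟨LinearEquiv.ofLinearMap (h.quasiReflectionMap u ↑d⁻¹) (h.quasiReflectionMap u (star ↑d⁻¹))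
    (LinearMap.ext (quasiReflectionMap_quasiReflectionMap_star_inv hd))
    (LinearMap.ext fun x => by
      have hd' : h.toFun u u = ↑(star d) + star ↑(star d) := by
        rw [Units.coe_star, star_star, add_comm, hd]
      simpa [Units.coe_star_inv] using quasiReflectionMap_quasiReflectionMap_star_inv hd' x),
    quasiReflectionMap_isometry hd⟩

theorem quasiReflection_apply (hd : h.toFun u u = d + star ↑d) (x : V) :
    (h.quasiReflection u d hd : V ≃ₗ[Aᵐᵒᵖ] V) x = x - op (↑d⁻¹ * h.toFun u x) • u := rfl

end QuasiReflection

theorem unitaryGroup_smul_def (g : h.unitaryGroup) (x : V) : g • x = (g : V ≃ₗ[Aᵐᵒᵖ] V) x := rfl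

variable {h}

theorem mem_orbit_of_isUnit_toFun_sub {x y : V} (hxy : h.toFun x x = h.toFun y y)
    (hunit : IsUnit (h.toFun (x - y) x)) : y ∈ MulAction.orbit h.unitaryGroup x := by
  obtain ⟨d, hd⟩ := hunit
  have hdd : h.toFun (x - y) (x - y) = d + star ↑d := by
    rw [hd, ← h.conj_symm, h.sub_right, h.sub_left, h.sub_left, h.sub_right, hxy]
    abel
  refine MulAction.mem_orbit_iff.mpr ⟨h.quasiReflection (x - y) d hdd, ?_⟩
  rw [unitaryGroup_smul_def, quasiReflection_apply, ← hd, Units.inv_mul, op_one, one_smul,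
    sub_sub_cancel]

theorem mem_orbit_of_neg_mem_orbit {x y : V} (hy : -y ∈ MulAction.orbit h.unitaryGroup x) :
    y ∈ MulAction.orbit h.unitaryGroup x := by
  have hneg : LinearEquiv.neg Aᵐᵒᵖ ∈ h.unitaryGroup := fun p q => by
    rw [LinearEquiv.neg_apply, LinearEquiv.neg_apply, h.neg_left, h.neg_right, neg_neg]
  obtain ⟨g, hg⟩ := MulAction.mem_orbit_iff.mp hy
  refine MulAction.mem_orbit_iff.mpr ⟨⟨_, hneg⟩ * g, ?_⟩
  rw [mul_smul, hg, unitaryGroup_smul_def, LinearEquiv.neg_apply, neg_neg]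

theorem exists_toFun_eq_one (hnd : h.Nondeg) {m : ℕ} {v : V} (hv : IsPrimitive A m v) :
    ∃ z, h.toFun z v = 1 := by
  obtain ⟨b, i, rfl⟩ := hv
  obtain ⟨z, hz, -⟩ := hnd ((MulOpposite.opLinearEquiv Aᵐᵒᵖ).symm.toLinearMap ∘ₗ b.coord i)
  exact ⟨z, by simp [hz]⟩

section IsLocalRing

variable [IsLocalRing A] {v w : V}

open IsLocalRing

theorem exists_isUnit_toFun_isUnit_toFun {z₁ z₂ : V} (h₁ : IsUnit (h.toFun z₁ v))
    (h₂ : IsUnit (h.toFun z₂ w)) : ∃ z, IsUnit (h.toFun z v) ∧ IsUnit (h.toFun z w) := by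
  by_cases k₁ : IsUnit (h.toFun z₁ w)
  · exact ⟨z₁, h₁, k₁⟩
  by_cases k₂ : IsUnit (h.toFun z₂ v)
  · exact ⟨z₂, k₂, h₂⟩
  refine ⟨z₁ + z₂, ?_, ?_⟩
  · rw [h.add_left]
    exact isUnit_add_of_isUnit_left h₁ k₂
  · rw [h.add_left]
    exact isUnit_add_of_isUnit_right k₁ h₂

theorem exists_isUnit_toFun_self (h2 : IsUnit (2 : A)) (hvv : ¬IsUnit (h.toFun v v))
    (hvw : ¬IsUnit (h.toFun v w)) {z : V} (hzv : IsUnit (h.toFun z v))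
    (hzw : IsUnit (h.toFun z w)) :
    ∃ z', IsUnit (h.toFun z' v) ∧ IsUnit (h.toFun z' w) ∧ IsUnit (h.toFun z' z') := by
  by_cases hzz : IsUnit (h.toFun z z)
  · exact ⟨z, hzv, hzw, hzz⟩
  obtain ⟨α, hα⟩ := hzv
  have hzv' : h.toFun z (op (↑α⁻¹ : A) • v) = 1 := by rw [h.smul_right, ← hα, Units.mul_inv]
  have hvz' : h.toFun (op (↑α⁻¹ : A) • v) z = 1 := by rw [h.conj_symm, hzv', star_one]
  refine ⟨z + op (↑α⁻¹ : A) • v, ?_, ?_, ?_⟩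
  · rw [h.add_left, h.smul_left, ← Units.coe_star, ← hα]
    exact isUnit_add_of_isUnit_left α.isUnit ((Units.isUnit_units_mul _ _).not.mpr hvv)
  · rw [h.add_left, h.smul_left, ← Units.coe_star]
    exact isUnit_add_of_isUnit_left hzw ((Units.isUnit_units_mul _ _).not.mpr hvw)
  · rw [h.add_left, h.add_right, h.add_right, hzv', hvz', h.smul_left, h.smul_right,
      ← Units.coe_star, add_assoc, ← add_assoc 1, one_add_one_eq_two]
    refine isUnit_add_of_isUnit_right hzz (isUnit_add_of_isUnit_left h2 ?_)
    rwa [Units.isUnit_units_mul, Units.isUnit_mul_units]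

theorem mem_orbit_of_not_isUnit (h2 : IsUnit (2 : A)) (hvw : h.toFun v v = h.toFun w w)
    (hvv : ¬IsUnit (h.toFun v v)) (hwv : ¬IsUnit (h.toFun w v)) {z : V}
    (hzv : IsUnit (h.toFun z v)) (hzw : IsUnit (h.toFun z w)) (hzz : IsUnit (h.toFun z z)) :
    w ∈ MulAction.orbit h.unitaryGroup v := by
  obtain ⟨d, hd⟩ := exists_units_add_star_eq h2 hzz (h.star_toFun_self z)
  set g := h.quasiReflection z d hd.symm
  have hwz : IsUnit (h.toFun w z) := by
    rw [h.conj_symm]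
    exact isUnit_star.mpr hzw
  rw [← MulAction.orbit_smul g v, unitaryGroup_smul_def]
  refine mem_orbit_of_isUnit_toFun_sub ((g.2 v v).trans hvw) ?_
  rw [h.sub_left, g.2 v v, quasiReflection_apply, h.sub_right, h.smul_right]
  exact isUnit_sub_of_isUnit_right hvv
    (isUnit_sub_of_isUnit_right hwv (hwz.mul (d⁻¹.isUnit.mul hzv)))

theorem mem_orbit_of_isPrimitive (hnd : h.Nondeg) (h2 : IsUnit (2 : A)) {m : ℕ}
    (hv : IsPrimitive A m v) (hw : IsPrimitive A m w) (hvw : h.toFun v v = h.toFun w w) :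
    w ∈ MulAction.orbit h.unitaryGroup v := by
  by_cases hsub : IsUnit (h.toFun (v - w) v)
  · exact mem_orbit_of_isUnit_toFun_sub hvw hsub
  by_cases hadd : IsUnit (h.toFun (v + w) v)
  · have hvw' : h.toFun v v = h.toFun (-w) (-w) := by rw [h.neg_left, h.neg_right, neg_neg, hvw]
    exact mem_orbit_of_neg_mem_orbit
      (mem_orbit_of_isUnit_toFun_sub hvw' (by rwa [sub_neg_eq_add]))
  rw [h.sub_left] at hsub
  rw [h.add_left] at hadd
  obtain ⟨hvv, hwv⟩ := not_isUnit_of_not_isUnit_add_of_not_isUnit_sub h2 hadd hsub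
  obtain ⟨z₁, hz₁⟩ := exists_toFun_eq_one hnd hv
  obtain ⟨z₂, hz₂⟩ := exists_toFun_eq_one hnd hw
  obtain ⟨z₀, hz₀v, hz₀w⟩ :=
    exists_isUnit_toFun_isUnit_toFun (hz₁ ▸ isUnit_one) (hz₂ ▸ isUnit_one)
  have hvw' : ¬IsUnit (h.toFun v w) := by rwa [h.conj_symm, isUnit_star]
  obtain ⟨z, hzv, hzw, hzz⟩ := exists_isUnit_toFun_self h2 hvv hvw' hz₀v hz₀w
  exact mem_orbit_of_not_isUnit h2 hvw hvv hwv hzv hzw hzz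

end IsLocalRing

end HermitianForm

theorem stmt_14_general {A V : Type*} [Ring A] [StarRing A] [IsLocalRing A]
    [AddCommGroup V] [Module Aᵐᵒᵖ V]
    (h2 : IsUnit (2 : A))
    (m : ℕ)
    (h : HermitianForm A V) (hnd : h.Nondeg)
    (v w : V) (hv : IsPrimitive A m v) (hw : IsPrimitive A m w)
    (hvw : h.toFun v v = h.toFun w w) :
    ∃ g : V ≃ₗ[Aᵐᵒᵖ] V,
      (∀ x y : V, h.toFun (g x) (g y) = h.toFun x y) ∧ g v = w := by
  obtain ⟨g, rfl⟩ := MulAction.mem_orbit_iff.mp (h.mem_orbit_of_isPrimitive hnd h2 hv hw hvw)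
  exact ⟨g, g.2, rfl⟩

/-- Theorem 4.1 (weak Witt extension): primitive vectors of the same length are
conjugate under the unitary group of `(V, h)`. -/
theorem stmt_14 {A V : Type*} [Ring A] [StarRing A] [IsLocalRing A]
    [AddCommGroup V] [Module Aᵐᵒᵖ V]
    (hcent : ∀ a : A, star a = a → a ∈ Set.center A)
    (h2 : IsUnit (2 : A))
    (R : Type*) [CommRing R] [IsLocalRing R] [Algebra R A]
    (hinj : Function.Injective (algebraMap R A))
    (hfix : ∀ a : A, star a = a ↔ a ∈ Set.range (algebraMap R A))
    [Finite (IsLocalRing.ResidueField R)]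
    (hodd : Odd (Nat.card (IsLocalRing.ResidueField R)))
    (hsq : ∀ x ∈ IsLocalRing.maximalIdeal R,
      ∃ y ∈ IsLocalRing.maximalIdeal R, (1 + y) ^ 2 = 1 + x)
    (m : ℕ) (hm : 1 ≤ m) (b : Module.Basis (Fin m) Aᵐᵒᵖ V)
    (h : HermitianForm A V) (hnd : h.Nondeg)
    (v w : V) (hv : IsPrimitive A m v) (hw : IsPrimitive A m w)
    (hvw : h.toFun v v = h.toFun w w) :
    ∃ g : V ≃ₗ[Aᵐᵒᵖ] V,
      (∀ x y : V, h.toFun (g x) (g y) = h.toFun x y) ∧ g v = w :=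
  stmt_14_general h2 m h hnd v w hv hw hvw
end

section
/- For any r ∈ m and any t ∈ R, there exists a ∈ A such that r·a*·a − (a + a*) = t. (The sequence a_{i+1} = a_i + f(a_i)/2 with f(a) = ra*a − (a+a*) − t terminates at a solution since r is nilpotent and f(a + f(a)/2) = (1/2) r f(a)(a + a* + f(a)/2).) -/
set_option maxHeartbeats 1000000


/-- Lemma 6.2: for `r` a fixed central nilpotent element and `t` a fixed central
element (i.e. `r ∈ 𝔪`, `t ∈ R`), the equation `r a* a - (a + a*) = t` has a
solution `a ∈ A`. -/
theorem stmt_18 {A : Type*} [Ring A] [StarRing A]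
    (h2 : IsUnit (2 : A))
    (r : A) (hrfix : star r = r) (hrc : r ∈ Set.center A) (hrn : IsNilpotent r)
    (t : A) (htfix : star t = t) (htc : t ∈ Set.center A) :
    ∃ a : A, r * star a * a - (a + star a) = t := by
  obtain ⟨v, hv⟩ := h2
  set u : A := ↑v⁻¹ with hu_def
  have h2u : (2 : A) * u = 1 := by rw [← hv]; exact v.mul_inv
  have hu2 : u * (2 : A) = 1 := by rw [← hv]; exact v.inv_mul
  -- u is central
  have huc : u ∈ Set.center A := by
    rw [Semigroup.mem_center_iff]
    intro g
    have h2c : ∀ g : A, g * 2 = 2 * g := fun g => by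
      rw [two_mul, mul_two]
    calc g * u = (u * 2) * g * u := by rw [hu2, one_mul]
      _ = u * (2 * g) * u := by rw [mul_assoc u 2 g]
      _ = u * (g * 2) * u := by rw [h2c]
      _ = u * g * (2 * u) := by rw [mul_assoc, mul_assoc, mul_assoc]
      _ = u * g := by rw [h2u, mul_one]
  -- u is star-fixed
  have hufix : star u = u := by
    have h1 : star u * 2 = 1 := by
      have := congrArg star h2u
      rwa [star_mul, star_ofNat, star_one] at this
    calc star u = star u * (2 * u) := by rw [h2u, mul_one]
      _ = (star u * 2) * u := by rw [mul_assoc]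
      _ = u := by rw [h1, one_mul]
  -- the subring generated by r, t, u: all its elements are central and star-fixed
  set s : Set A := {r, t, u} with hs_def
  have hs_center : ∀ x ∈ s, x ∈ Set.center A := by
    intro x hx
    rcases hx with h | h | h <;> subst h <;> assumption
  set S : Subring A := Subring.closure s with hS_def
  have hSle : S ≤ Subring.center A := Subring.closure_le.mpr hs_center
  have hScomm : ∀ x ∈ S, ∀ g : A, g * x = x * g :=
    fun x hx => Subring.mem_center_iff.mp (hSle hx)
  have hSfix : ∀ x ∈ S, star x = x := by
    intro x hx
    induction hx using Subring.closure_induction with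
    | mem y hy =>
      rcases hy with h | h | h <;> subst h <;> assumption
    | zero => exact star_zero A
    | one => exact star_one A
    | add x y hx hy ihx ihy => rw [star_add, ihx, ihy]
    | neg x hx ihx => rw [star_neg, ihx]
    | mul x y hx hy ihx ihy => rw [star_mul, ihx, ihy, hScomm y hy x]
  -- lift the elements to the center, which is a commutative ring
  set C : Subring A := Subring.center A with hC_def
  have hrC : r ∈ C := Subring.mem_center_iff.mpr
    fun g => (Semigroup.mem_center_iff.mp hrc g)
  have htC : t ∈ C := Subring.mem_center_iff.mpr
    fun g => (Semigroup.mem_center_iff.mp htc g)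
  have huC : u ∈ C := Subring.mem_center_iff.mpr
    fun g => (Semigroup.mem_center_iff.mp huc g)
  set rc : C := ⟨r, hrC⟩ with hrc_def
  set tc : C := ⟨t, htC⟩ with htc_def
  set uc : C := ⟨u, huC⟩ with huc_def
  have h2uc : (2 : C) * uc = 1 := by
    apply Subtype.ext
    push_cast
    exact h2u
  have hrS : r ∈ S := Subring.subset_closure (by left; rfl)
  have htS : t ∈ S := Subring.subset_closure (by right; left; rfl)
  have huS : u ∈ S := Subring.subset_closure (by right; right; rfl)
  -- Newton iteration: the defect can be pushed into higher powers of rc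
  have key : ∀ k : ℕ, ∃ a w : C, (a : A) ∈ S ∧ (w : A) ∈ S ∧
      rc * a * a - 2 * a - tc = rc ^ k * w := by
    intro k
    induction k with
    | zero =>
      refine ⟨-(tc * uc), rc * (-(tc * uc)) * (-(tc * uc)) - 2 * (-(tc * uc)) - tc,
        ?_, ?_, by ring⟩
      · push_cast
        exact neg_mem (mul_mem htS huS)
      · push_cast
        have haS : -(t * u) ∈ S := neg_mem (mul_mem htS huS)
        have h2S : (2 : A) ∈ S := by
          rw [← one_add_one_eq_two]; exact add_mem (one_mem S) (one_mem S)
        exact sub_mem (sub_mem (mul_mem (mul_mem hrS haS) haS) (mul_mem h2S haS)) htS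
    | succ k ih =>
      obtain ⟨a, w, haS, hwS, hw⟩ := ih
      have hrkS : (r : A) ^ k ∈ S := pow_mem hrS k
      refine ⟨a + rc ^ k * w * uc, 2 * a * w * uc + rc ^ k * w * w * uc * uc, ?_, ?_, ?_⟩
      · push_cast
        exact add_mem haS (mul_mem (mul_mem hrkS hwS) huS)
      · push_cast
        have h2S : (2 : A) ∈ S := by
          rw [← one_add_one_eq_two]; exact add_mem (one_mem S) (one_mem S)
        exact add_mem (mul_mem (mul_mem (mul_mem h2S haS) hwS) huS)
          (mul_mem (mul_mem (mul_mem (mul_mem hrkS hwS) hwS) huS) huS)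
      · have expand : rc * (a + rc ^ k * w * uc) * (a + rc ^ k * w * uc)
            - 2 * (a + rc ^ k * w * uc) - tc
            = (rc * a * a - 2 * a - tc) + 2 * rc * a * (rc ^ k * w * uc)
              + rc * (rc ^ k * w * uc) * (rc ^ k * w * uc) - (2 * uc) * (rc ^ k * w) := by ring
        rw [expand, hw, h2uc]
        ring
  obtain ⟨k, hk⟩ := hrn
  obtain ⟨a, w, haS, hwS, hw⟩ := key k
  have hrck : rc ^ k = 0 := by
    apply Subtype.ext
    push_cast
    exact hk
  rw [hrck, zero_mul] at hw
  refine ⟨(a : A), ?_⟩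
  have hafix : star (a : A) = a := hSfix _ haS
  have heq : r * (a : A) * a - 2 * a - t = 0 := by
    have := congrArg (Subtype.val) hw
    push_cast at this
    exact this
  rw [hafix]
  have h2a : (a : A) + a = 2 * a := (two_mul _).symm
  rw [h2a]
  exact sub_eq_zero.mp heq
end
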